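/- Let (U, S) be a Set Cover instance and let H = (V, E) with V = V_1 ∪ V_2 be the hypergraph constructed from it as described. Then for every core C of H there exists a core C' of H with C' ⊆ V_1 and |C'| ≤ |C|. -/
import Mathlib


variable {α : Type*} [DecidableEq α]

/-- `Assim E C v` : vertex `v` eventually gets assimilated when the propagation
process of Definition 3 (core) is run from the initial set `C` on the edge family `E`:
`v` is assimilated if it lies in `C`, or if it lies in some edge `e ∈ E`
all of whose other vertices are assimilated (i.e. `|e ∩ assimilated| = |e| - 1`,
so `e` can extend the assimilated set by `v`). -/
inductive Assim (E : Finset (Finset α)) (C : Finset α) : α → Prop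
  | base (v : α) : v ∈ C → Assim E C v
  | step (e : Finset α) (v : α) : e ∈ E → v ∈ e →
      (∀ w ∈ e, w ≠ v → Assim E C w) → Assim E C v

/-- `C` is a core of the hypergraph `(V, E)`: the propagation process started from `C`
terminates with every edge removed (covered), i.e. every vertex of every edge is
eventually assimilated. -/
def IsCore (V : Finset α) (E : Finset (Finset α)) (C : Finset α) : Prop :=
  C ⊆ V ∧ ∀ e ∈ E, ∀ v ∈ e, Assim E C v

/-- The minimum core size of the hypergraph `(V, E)`. -/
noncomputable def minCoreSize (V : Finset α) (E : Finset (Finset α)) : ℕ :=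
  sInf {k | ∃ C, IsCore V E C ∧ C.card = k}

/-- The vertex set `V_i = C ∪ ⋃_{j=1}^{i} ⋃_{e ∈ L j} e` determined by a core `C`
and layers `L`. -/
def layerVerts (C : Finset α) (L : ℕ → Finset (Finset α)) (i : ℕ) : Finset α :=
  C ∪ (Finset.Icc 1 i).biUnion fun j => (L j).biUnion id

/-- `L 1, …, L r` is a partition of `E` into layers witnessing radius `r` for the
core `C`: the layers are disjoint, their union is `E`, and every edge `e` in
layer `i` satisfies `|e ∩ V_{i-1}| = |e| - 1`. -/
def IsLayering (E : Finset (Finset α)) (C : Finset α)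
    (L : ℕ → Finset (Finset α)) (r : ℕ) : Prop :=
  (∀ i ∈ Finset.Icc 1 r, L i ⊆ E) ∧
  (∀ i ∈ Finset.Icc 1 r, ∀ j ∈ Finset.Icc 1 r, i ≠ j → Disjoint (L i) (L j)) ∧
  (Finset.Icc 1 r).biUnion L = E ∧
  ∀ i ∈ Finset.Icc 1 r, ∀ e ∈ L i, (e ∩ layerVerts C L (i - 1)).card = e.card - 1

/-- The radius of a core `C` : the minimum `r` such that `E` can be partitioned
into `r` layers as in the definition of the radius. -/
noncomputable def coreRadius (E : Finset (Finset α)) (C : Finset α) : ℕ :=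
  sInf {r | ∃ L, IsLayering E C L r}


section SetCover

variable {β : Type*} [DecidableEq β]

/-- Vertex type for the Set Cover reduction: vertices `s_i`, `s'_i` (for sets `i`)
and `u_j`, `u'_j` (for universe elements `j`). -/
abbrev SCVert (β : Type*) := (Finset β ⊕ Finset β) ⊕ (β ⊕ β)

/-- the vertex `s_i` -/
def vS (i : Finset β) : SCVert β := Sum.inl (Sum.inl i)
/-- the vertex `s'_i` -/
def vS' (i : Finset β) : SCVert β := Sum.inl (Sum.inr i)
/-- the vertex `u_j` -/
def vU (u : β) : SCVert β := Sum.inr (Sum.inl u)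
/-- the vertex `u'_j` -/
def vU' (u : β) : SCVert β := Sum.inr (Sum.inr u)

/-- `V_1 = {s_i, s'_i : S_i ∈ S}` -/
def scV1 (S : Finset (Finset β)) : Finset (SCVert β) := S.image vS ∪ S.image vS'

/-- `V_2 = {u_j, u'_j : u_j ∈ U}` -/
def scV2 (U : Finset β) : Finset (SCVert β) := U.image vU ∪ U.image vU'

/-- `E_1 = {{s_i, s'_i} : S_i ∈ S}` -/
def scE1 (S : Finset (Finset β)) : Finset (Finset (SCVert β)) :=
  S.image fun i => {vS i, vS' i}

/-- `E_2 = {{s_i, s'_i, u_j}, {s_i, s'_i, u'_j} : S_i ∈ S, u_j ∈ S_i}` -/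
def scE2 (S : Finset (Finset β)) : Finset (Finset (SCVert β)) :=
  S.biUnion fun i =>
    i.image (fun u => ({vS i, vS' i, vU u} : Finset (SCVert β))) ∪
    i.image (fun u => ({vS i, vS' i, vU' u} : Finset (SCVert β)))

/-- `E_3 = {V_2 ∪ {s_i}, V_2 ∪ {s'_i} : S_i ∈ S}` -/
def scE3 (U : Finset β) (S : Finset (Finset β)) : Finset (Finset (SCVert β)) :=
  S.image (fun i => insert (vS i) (scV2 U)) ∪ S.image (fun i => insert (vS' i) (scV2 U))

/-- The vertex set `V = V_1 ∪ V_2` of the constructed hypergraph. -/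
def scV (U : Finset β) (S : Finset (Finset β)) : Finset (SCVert β) := scV1 S ∪ scV2 U

/-- The edge set `E = E_1 ∪ E_2 ∪ E_3` of the constructed hypergraph. -/
def scE (U : Finset β) (S : Finset (Finset β)) : Finset (Finset (SCVert β)) :=
  scE1 S ∪ scE2 S ∪ scE3 U S

set_option linter.unusedSectionVars false
@[simp] lemma vS_inj {i j : Finset β} : vS i = vS j ↔ i = j := by simp [vS]
@[simp] lemma vS'_inj {i j : Finset β} : vS' i = vS' j ↔ i = j := by simp [vS']
@[simp] lemma vU_inj {i j : β} : vU i = vU j ↔ i = j := by simp [vU]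
@[simp] lemma vU'_inj {i j : β} : vU' i = vU' j ↔ i = j := by simp [vU']
@[simp] lemma vS_ne_vS' {i j : Finset β} : vS i ≠ vS' j := by simp [vS, vS']
@[simp] lemma vS'_ne_vS {i j : Finset β} : vS' i ≠ vS j := by simp [vS, vS']
@[simp] lemma vS_ne_vU {i : Finset β} {u : β} : vS i ≠ vU u := by simp [vS, vU]
@[simp] lemma vS_ne_vU' {i : Finset β} {u : β} : vS i ≠ vU' u := by simp [vS, vU']
@[simp] lemma vS'_ne_vU {i : Finset β} {u : β} : vS' i ≠ vU u := by simp [vS', vU]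
@[simp] lemma vS'_ne_vU' {i : Finset β} {u : β} : vS' i ≠ vU' u := by simp [vS', vU']
@[simp] lemma vU_ne_vS {i : Finset β} {u : β} : vU u ≠ vS i := by simp [vS, vU]
@[simp] lemma vU'_ne_vS {i : Finset β} {u : β} : vU' u ≠ vS i := by simp [vS, vU']
@[simp] lemma vU_ne_vS' {i : Finset β} {u : β} : vU u ≠ vS' i := by simp [vS', vU]
@[simp] lemma vU'_ne_vS' {i : Finset β} {u : β} : vU' u ≠ vS' i := by simp [vS', vU']
@[simp] lemma vU_ne_vU' {u v : β} : vU u ≠ vU' v := by simp [vU, vU']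
@[simp] lemma vU'_ne_vU {u v : β} : vU' u ≠ vU v := by simp [vU, vU']
lemma mem_scE {U : Finset β} {S : Finset (Finset β)} {e : Finset (SCVert β)} :
    e ∈ scE U S ↔ (∃ i ∈ S, e = {vS i, vS' i}) ∨
      (∃ i ∈ S, ∃ u ∈ i, e = {vS i, vS' i, vU u} ∨ e = {vS i, vS' i, vU' u}) ∨
      (∃ i ∈ S, e = insert (vS i) (scV2 U) ∨ e = insert (vS' i) (scV2 U)) := by
  constructor
  · intro h
    simp only [scE, Finset.mem_union] at h
    rcases h with (h|h)|h
    · rw [scE1, Finset.mem_image] at h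
      obtain ⟨i, hi, rfl⟩ := h
      exact Or.inl ⟨i, hi, rfl⟩
    · rw [scE2, Finset.mem_biUnion] at h
      obtain ⟨i, hi, hm⟩ := h
      rcases Finset.mem_union.mp hm with h'|h'
      · obtain ⟨u, hu, rfl⟩ := Finset.mem_image.mp h'
        exact Or.inr (Or.inl ⟨i, hi, u, hu, Or.inl rfl⟩)
      · obtain ⟨u, hu, rfl⟩ := Finset.mem_image.mp h'
        exact Or.inr (Or.inl ⟨i, hi, u, hu, Or.inr rfl⟩)
    · rw [scE3, Finset.mem_union] at h
      rcases h with h'|h'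
      · obtain ⟨i, hi, rfl⟩ := Finset.mem_image.mp h'
        exact Or.inr (Or.inr ⟨i, hi, Or.inl rfl⟩)
      · obtain ⟨i, hi, rfl⟩ := Finset.mem_image.mp h'
        exact Or.inr (Or.inr ⟨i, hi, Or.inr rfl⟩)
  · rintro (⟨i, hi, rfl⟩ | ⟨i, hi, u, hu, (rfl|rfl)⟩ | ⟨i, hi, (rfl|rfl)⟩) <;>
      simp only [scE, scE1, scE2, scE3, Finset.mem_union, Finset.mem_image,
        Finset.mem_biUnion]
    · exact Or.inl (Or.inl ⟨i, hi, rfl⟩)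
    · exact Or.inl (Or.inr ⟨i, hi, Or.inl ⟨u, hu, rfl⟩⟩)
    · exact Or.inl (Or.inr ⟨i, hi, Or.inr ⟨u, hu, rfl⟩⟩)
    · exact Or.inr (Or.inl ⟨i, hi, rfl⟩)
    · exact Or.inr (Or.inr ⟨i, hi, rfl⟩)

lemma mem_scV2 {U : Finset β} {w : SCVert β} :
    w ∈ scV2 U ↔ (∃ u ∈ U, w = vU u) ∨ (∃ u ∈ U, w = vU' u) := by
  simp only [scV2, Finset.mem_union, Finset.mem_image]
  aesop

lemma isCore_of_cover {U : Finset β} {S : Finset (Finset β)} (hsub : ∀ i ∈ S, i ⊆ U)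
    (D : Finset (Finset β)) (hD : D ⊆ S) (hcov' : ∀ u ∈ U, ∃ i ∈ D, u ∈ i) :
    IsCore (scV U S) (scE U S) (D.image vS) := by
  set E := scE U S with hE
  set C' := D.image vS with hC'
  have hS : ∀ i ∈ D, Assim E C' (vS i) :=
    fun i hi => Assim.base _ (Finset.mem_image_of_mem _ hi)
  have hS' : ∀ i ∈ D, Assim E C' (vS' i) := by
    intro i hi
    refine Assim.step {vS i, vS' i} (vS' i) ?_ (by simp) ?_
    · exact mem_scE.mpr (Or.inl ⟨i, hD hi, rfl⟩)
    · intro w hw hne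
      rcases Finset.mem_insert.mp hw with rfl | hw
      · exact hS i hi
      · exact absurd (Finset.mem_singleton.mp hw) hne
  have hU : ∀ u ∈ U, Assim E C' (vU u) := by
    intro u hu
    obtain ⟨i, hi, hui⟩ := hcov' u hu
    refine Assim.step {vS i, vS' i, vU u} (vU u) ?_ (by simp) ?_
    · exact mem_scE.mpr (Or.inr (Or.inl ⟨i, hD hi, u, hui, Or.inl rfl⟩))
    · intro w hw hne
      rcases Finset.mem_insert.mp hw with rfl | hw
      · exact hS i hi
      rcases Finset.mem_insert.mp hw with rfl | hw
      · exact hS' i hi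
      · exact absurd (Finset.mem_singleton.mp hw) hne
  have hU' : ∀ u ∈ U, Assim E C' (vU' u) := by
    intro u hu
    obtain ⟨i, hi, hui⟩ := hcov' u hu
    refine Assim.step {vS i, vS' i, vU' u} (vU' u) ?_ (by simp) ?_
    · exact mem_scE.mpr (Or.inr (Or.inl ⟨i, hD hi, u, hui, Or.inr rfl⟩))
    · intro w hw hne
      rcases Finset.mem_insert.mp hw with rfl | hw
      · exact hS i hi
      rcases Finset.mem_insert.mp hw with rfl | hw
      · exact hS' i hi
      · exact absurd (Finset.mem_singleton.mp hw) hne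
  have hV2 : ∀ w ∈ scV2 U, Assim E C' w := by
    intro w hw
    rcases mem_scV2.mp hw with ⟨u, hu, rfl⟩ | ⟨u, hu, rfl⟩
    · exact hU u hu
    · exact hU' u hu
  have hAllS : ∀ i ∈ S, Assim E C' (vS i) := by
    intro i hi
    refine Assim.step (insert (vS i) (scV2 U)) (vS i) ?_ (Finset.mem_insert_self _ _) ?_
    · exact mem_scE.mpr (Or.inr (Or.inr ⟨i, hi, Or.inl rfl⟩))
    · intro w hw hne
      rcases Finset.mem_insert.mp hw with rfl | hw
      · exact absurd rfl hne
      · exact hV2 w hw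
  have hAllS' : ∀ i ∈ S, Assim E C' (vS' i) := by
    intro i hi
    refine Assim.step (insert (vS' i) (scV2 U)) (vS' i) ?_ (Finset.mem_insert_self _ _) ?_
    · exact mem_scE.mpr (Or.inr (Or.inr ⟨i, hi, Or.inr rfl⟩))
    · intro w hw hne
      rcases Finset.mem_insert.mp hw with rfl | hw
      · exact absurd rfl hne
      · exact hV2 w hw
  constructor
  · intro x hx
    obtain ⟨i, hi, rfl⟩ := Finset.mem_image.mp hx
    exact Finset.mem_union_left _
      (Finset.mem_union_left _ (Finset.mem_image_of_mem _ (hD hi)))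
  · intro e he v hv
    rcases mem_scE.mp he with ⟨i, hi, rfl⟩ | ⟨i, hi, u, hu, (rfl|rfl)⟩ | ⟨i, hi, (rfl|rfl)⟩
    · rcases Finset.mem_insert.mp hv with rfl | hv
      · exact hAllS i hi
      · exact Finset.mem_singleton.mp hv ▸ hAllS' i hi
    · rcases Finset.mem_insert.mp hv with rfl | hv
      · exact hAllS i hi
      rcases Finset.mem_insert.mp hv with rfl | hv
      · exact hAllS' i hi
      · exact Finset.mem_singleton.mp hv ▸ hU u (hsub i hi hu)
    · rcases Finset.mem_insert.mp hv with rfl | hv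
      · exact hAllS i hi
      rcases Finset.mem_insert.mp hv with rfl | hv
      · exact hAllS' i hi
      · exact Finset.mem_singleton.mp hv ▸ hU' u (hsub i hi hu)
    · rcases Finset.mem_insert.mp hv with rfl | hv
      · exact hAllS i hi
      · exact hV2 v hv
    · rcases Finset.mem_insert.mp hv with rfl | hv
      · exact hAllS' i hi
      · exact hV2 v hv


lemma key_assim {U : Finset β} {S : Finset (Finset β)} {C : Finset (SCVert β)}
    {T : Finset (Finset β)} (hT : ∀ i, i ∈ T ↔ i ∈ S ∧ (vS i ∈ C ∨ vS' i ∈ C))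
    {W : Finset β} (hW : ∀ u, u ∈ W ↔ u ∈ U ∧ ∀ i ∈ T, u ∉ i)
    {Y : Finset (SCVert β)} (hY : Y = W.image vU ∪ W.image vU') :
    ∀ v, Assim (scE U S) C v →
      (((∃ u ∈ W, v = vU u ∨ v = vU' u) ∧ v ∉ C) ∨
        (∃ i ∈ S, i ∉ T ∧ (v = vS i ∨ v = vS' i))) →
      ∃ w, Y \ {w} ⊆ C := by
  intro v hassim
  induction hassim with
  | base v hv =>
    rintro (⟨_, hvC⟩ | ⟨i, hiS, hiT, hv'⟩)
    · exact absurd hv hvC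
    · refine absurd ((hT i).mpr ⟨hiS, ?_⟩) hiT
      rcases hv' with rfl | rfl
      · exact Or.inl hv
      · exact Or.inr hv
  | step e v he hve hprev ih =>
    intro hX
    have hTn : ∀ {i : Finset β}, i ∈ S → i ∉ T → vS i ∉ C ∧ vS' i ∉ C := by
      intro i hiS hiT
      constructor <;> intro h <;> exact hiT ((hT i).mpr ⟨hiS, by tauto⟩)
    rcases mem_scE.mp he with ⟨i, hiS, rfl⟩ | ⟨i, hiS, u, hu, (rfl|rfl)⟩ | ⟨i, hiS, (rfl|rfl)⟩
    -- E1 edge {vS i, vS' i}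
    · rcases hX with ⟨⟨u, huW, (rfl|rfl)⟩, _⟩ | ⟨i', hi'S, hi'T, hv'⟩
      · simp at hve
      · simp at hve
      · rcases hv' with rfl | rfl
        · have hii : i' = i := by
            rcases Finset.mem_insert.mp hve with h | h
            · exact vS_inj.mp h
            · exact absurd (Finset.mem_singleton.mp h) vS_ne_vS'
          subst hii
          exact ih (vS' i') (by simp) (by simp)
            (Or.inr ⟨i', hi'S, hi'T, Or.inr rfl⟩)
        · have hii : i' = i := by
            rcases Finset.mem_insert.mp hve with h | h
            · exact absurd h vS'_ne_vS
            · exact vS'_inj.mp (Finset.mem_singleton.mp h)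
          subst hii
          exact ih (vS i') (by simp) (by simp)
            (Or.inr ⟨i', hi'S, hi'T, Or.inl rfl⟩)
    -- E2 edge {vS i, vS' i, vU u}
    · rcases hX with ⟨⟨u', hu'W, (rfl|rfl)⟩, _⟩ | ⟨i', hi'S, hi'T, hv'⟩
      · have huu : u' = u := by
          simp only [Finset.mem_insert, Finset.mem_singleton] at hve
          rcases hve with h|h|h
          · exact absurd h vU_ne_vS
          · exact absurd h vU_ne_vS'
          · exact vU_inj.mp h
        subst huu
        have hiT : i ∉ T := fun h => ((hW u').mp hu'W).2 i h hu
        exact ih (vS i) (by simp) (by simp) (Or.inr ⟨i, hiS, hiT, Or.inl rfl⟩)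
      · simp only [Finset.mem_insert, Finset.mem_singleton] at hve
        rcases hve with h|h|h
        · exact absurd h vU'_ne_vS
        · exact absurd h vU'_ne_vS'
        · exact absurd h vU'_ne_vU
      · rcases hv' with rfl | rfl
        · have hii : i' = i := by
            simp only [Finset.mem_insert, Finset.mem_singleton] at hve
            rcases hve with h|h|h
            · exact vS_inj.mp h
            · exact absurd h vS_ne_vS'
            · exact absurd h vS_ne_vU
          subst hii
          exact ih (vS' i') (by simp) (by simp) (Or.inr ⟨i', hi'S, hi'T, Or.inr rfl⟩)
        · have hii : i' = i := by
            simp only [Finset.mem_insert, Finset.mem_singleton] at hve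
            rcases hve with h|h|h
            · exact absurd h vS'_ne_vS
            · exact vS'_inj.mp h
            · exact absurd h vS'_ne_vU
          subst hii
          exact ih (vS i') (by simp) (by simp) (Or.inr ⟨i', hi'S, hi'T, Or.inl rfl⟩)
    -- E2 edge {vS i, vS' i, vU' u}
    · rcases hX with ⟨⟨u', hu'W, (rfl|rfl)⟩, _⟩ | ⟨i', hi'S, hi'T, hv'⟩
      · simp only [Finset.mem_insert, Finset.mem_singleton] at hve
        rcases hve with h|h|h
        · exact absurd h vU_ne_vS
        · exact absurd h vU_ne_vS'
        · exact absurd h vU_ne_vU'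
      · have huu : u' = u := by
          simp only [Finset.mem_insert, Finset.mem_singleton] at hve
          rcases hve with h|h|h
          · exact absurd h vU'_ne_vS
          · exact absurd h vU'_ne_vS'
          · exact vU'_inj.mp h
        subst huu
        have hiT : i ∉ T := fun h => ((hW u').mp hu'W).2 i h hu
        exact ih (vS i) (by simp) (by simp) (Or.inr ⟨i, hiS, hiT, Or.inl rfl⟩)
      · rcases hv' with rfl | rfl
        · have hii : i' = i := by
            simp only [Finset.mem_insert, Finset.mem_singleton] at hve
            rcases hve with h|h|h
            · exact vS_inj.mp h
            · exact absurd h vS_ne_vS'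
            · exact absurd h vS_ne_vU'
          subst hii
          exact ih (vS' i') (by simp) (by simp) (Or.inr ⟨i', hi'S, hi'T, Or.inr rfl⟩)
        · have hii : i' = i := by
            simp only [Finset.mem_insert, Finset.mem_singleton] at hve
            rcases hve with h|h|h
            · exact absurd h vS'_ne_vS
            · exact vS'_inj.mp h
            · exact absurd h vS'_ne_vU'
          subst hii
          exact ih (vS i') (by simp) (by simp) (Or.inr ⟨i', hi'S, hi'T, Or.inl rfl⟩)
    -- E3 edges
    all_goals {
      by_cases hc : ∀ w ∈ Y, w ≠ v → w ∈ C
      · refine ⟨v, fun w hw => ?_⟩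
        obtain ⟨hwY, hwv⟩ := Finset.mem_sdiff.mp hw
        exact hc w hwY (by simpa using hwv)
      · push_neg at hc
        obtain ⟨w, hwY, hwv, hwC⟩ := hc
        have hwY' := hwY
        rw [hY] at hwY'
        have hwe : w ∈ scV2 U := by
          rcases Finset.mem_union.mp hwY' with h | h
          · obtain ⟨u, huW, rfl⟩ := Finset.mem_image.mp h
            exact mem_scV2.mpr (Or.inl ⟨u, ((hW u).mp huW).1, rfl⟩)
          · obtain ⟨u, huW, rfl⟩ := Finset.mem_image.mp h
            exact mem_scV2.mpr (Or.inr ⟨u, ((hW u).mp huW).1, rfl⟩)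
        have hwX : (∃ u ∈ W, w = vU u ∨ w = vU' u) ∧ w ∉ C := by
          refine ⟨?_, hwC⟩
          rcases Finset.mem_union.mp hwY' with h | h
          · obtain ⟨u, huW, rfl⟩ := Finset.mem_image.mp h
            exact ⟨u, huW, Or.inl rfl⟩
          · obtain ⟨u, huW, rfl⟩ := Finset.mem_image.mp h
            exact ⟨u, huW, Or.inr rfl⟩
        exact ih w (Finset.mem_insert_of_mem hwe) hwv (Or.inl hwX)
    }



/-- for a Set Cover instance `(U, S)` and the constructed hypergraph
`H = (V, E)` with `V = V_1 ∪ V_2`, every core `C` of `H` admits a core `C' ⊆ V_1`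
with `|C'| ≤ |C|`. -/
theorem setCover_core_can_be_moved_into_V1 (U : Finset β) (S : Finset (Finset β))
    (hsub : ∀ i ∈ S, i ⊆ U) (hcov : ∀ u ∈ U, ∃ i ∈ S, u ∈ i)
    (C : Finset (SCVert β)) (hC : IsCore (scV U S) (scE U S) C) :
    ∃ C' : Finset (SCVert β), IsCore (scV U S) (scE U S) C' ∧ C' ⊆ scV1 S ∧
      C'.card ≤ C.card := by
  classical
  obtain ⟨hCV, hCore⟩ := hC
  set T := S.filter (fun i => vS i ∈ C ∨ vS' i ∈ C) with hTdef
  have hT : ∀ i, i ∈ T ↔ i ∈ S ∧ (vS i ∈ C ∨ vS' i ∈ C) := fun i => Finset.mem_filter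
  set W := U.filter (fun u => ∀ i ∈ T, u ∉ i) with hWdef
  have hW : ∀ u, u ∈ W ↔ u ∈ U ∧ ∀ i ∈ T, u ∉ i := fun u => Finset.mem_filter
  obtain ⟨g, hg⟩ : ∃ g : β → Finset β, ∀ u ∈ U, g u ∈ S ∧ u ∈ g u := by
    refine ⟨fun u => if h : u ∈ U then (hcov u h).choose else ∅, fun u hu => ?_⟩
    simp only [dif_pos hu]
    obtain ⟨hi, hui⟩ := (hcov u hu).choose_spec
    exact ⟨hi, hui⟩
  set D := T ∪ W.image g with hDdef
  have hDS : D ⊆ S := by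
    intro i hi
    rcases Finset.mem_union.mp hi with h | h
    · exact ((hT i).mp h).1
    · obtain ⟨u, huW, rfl⟩ := Finset.mem_image.mp h
      exact (hg u ((hW u).mp huW).1).1
  have hDcov : ∀ u ∈ U, ∃ i ∈ D, u ∈ i := by
    intro u hu
    by_cases h : ∀ i ∈ T, u ∉ i
    · have huW : u ∈ W := (hW u).mpr ⟨hu, h⟩
      exact ⟨g u, Finset.mem_union_right _ (Finset.mem_image_of_mem _ huW), (hg u hu).2⟩
    · push_neg at h
      obtain ⟨i, hiT, hui⟩ := h
      exact ⟨i, Finset.mem_union_left _ hiT, hui⟩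
  refine ⟨D.image vS, isCore_of_cover hsub D hDS hDcov, ?_, ?_⟩
  · intro x hx
    obtain ⟨i, hi, rfl⟩ := Finset.mem_image.mp hx
    exact Finset.mem_union_left _ (Finset.mem_image_of_mem _ (hDS hi))
  -- cardinality bound
  have hTC : T.card ≤ (C ∩ scV1 S).card := by
    apply Finset.card_le_card_of_injOn (fun i => if vS i ∈ C then vS i else vS' i)
    · intro i hi
      obtain ⟨hiS, hior⟩ := (hT i).mp hi
      by_cases h : vS i ∈ C
      · simp only [if_pos h]
        exact Finset.mem_inter.mpr
          ⟨h, Finset.mem_union_left _ (Finset.mem_image_of_mem _ hiS)⟩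
      · simp only [if_neg h]
        exact Finset.mem_inter.mpr
          ⟨hior.resolve_left h, Finset.mem_union_right _ (Finset.mem_image_of_mem _ hiS)⟩
    · intro i _ j _ hij
      dsimp only at hij
      split_ifs at hij with h1 h2 h2
      · exact vS_inj.mp hij
      · exact absurd hij vS_ne_vS'
      · exact absurd hij vS'_ne_vS
      · exact vS'_inj.mp hij
  have hWC : W.card ≤ (C ∩ scV2 U).card := by
    rcases Finset.eq_empty_or_nonempty W with hWe | ⟨u0, hu0⟩
    · simp [hWe]
    · set Y := W.image vU ∪ W.image vU' with hYdef
      have hYdisj : Disjoint (W.image vU) (W.image (vU' : β → SCVert β)) := by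
        rw [Finset.disjoint_left]
        rintro x hx hx'
        obtain ⟨u, _, rfl⟩ := Finset.mem_image.mp hx
        obtain ⟨u', _, h⟩ := Finset.mem_image.mp hx'
        exact vU'_ne_vU h
      have hYcard : Y.card = 2 * W.card := by
        rw [hYdef, Finset.card_union_of_disjoint hYdisj,
          Finset.card_image_of_injective _ (fun a b h => vU_inj.mp h),
          Finset.card_image_of_injective _ (fun a b h => vU'_inj.mp h)]
        ring
      have hkey : ∃ w, Y \ {w} ⊆ C := by
        by_cases hYC : ∀ y ∈ Y, y ∈ C
        · exact ⟨vU u0, fun w hw => hYC w (Finset.mem_sdiff.mp hw).1⟩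
        · push_neg at hYC
          obtain ⟨y, hyY, hyC⟩ := hYC
          have hyY' := hyY
          rw [hYdef] at hyY'
          rcases Finset.mem_union.mp hyY' with h | h
          · obtain ⟨u, huW, rfl⟩ := Finset.mem_image.mp h
            have huU := ((hW u).mp huW).1
            obtain ⟨i, hiS, hui⟩ := hcov u huU
            have hyA : Assim (scE U S) C (vU u) :=
              hCore _ (mem_scE.mpr (Or.inr (Or.inl ⟨i, hiS, u, hui, Or.inl rfl⟩))) _
                (by simp)
            exact key_assim hT hW hYdef (vU u) hyA (Or.inl ⟨⟨u, huW, Or.inl rfl⟩, hyC⟩)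
          · obtain ⟨u, huW, rfl⟩ := Finset.mem_image.mp h
            have huU := ((hW u).mp huW).1
            obtain ⟨i, hiS, hui⟩ := hcov u huU
            have hyA : Assim (scE U S) C (vU' u) :=
              hCore _ (mem_scE.mpr (Or.inr (Or.inl ⟨i, hiS, u, hui, Or.inr rfl⟩))) _
                (by simp)
            exact key_assim hT hW hYdef (vU' u) hyA (Or.inl ⟨⟨u, huW, Or.inr rfl⟩, hyC⟩)
      obtain ⟨w, hw⟩ := hkey
      have hsub2 : Y \ {w} ⊆ C ∩ scV2 U := by
        intro x hx
        refine Finset.mem_inter.mpr ⟨hw hx, ?_⟩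
        have hxY := (Finset.mem_sdiff.mp hx).1
        rw [hYdef] at hxY
        rcases Finset.mem_union.mp hxY with h | h
        · obtain ⟨u, huW, rfl⟩ := Finset.mem_image.mp h
          exact mem_scV2.mpr (Or.inl ⟨u, ((hW u).mp huW).1, rfl⟩)
        · obtain ⟨u, huW, rfl⟩ := Finset.mem_image.mp h
          exact mem_scV2.mpr (Or.inr ⟨u, ((hW u).mp huW).1, rfl⟩)
      have h1 : Y.card - 1 ≤ (Y \ {w}).card := by
        simpa using Finset.le_card_sdiff ({w} : Finset (SCVert β)) Y
      have h2 : (Y \ {w}).card ≤ (C ∩ scV2 U).card := Finset.card_le_card hsub2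
      have hWpos : 1 ≤ W.card := Finset.card_pos.mpr ⟨u0, hu0⟩
      omega
  have hdisjV : Disjoint (scV1 S) (scV2 U) := by
    rw [Finset.disjoint_left]
    intro x hx hx'
    rcases mem_scV2.mp hx' with ⟨u, _, rfl⟩ | ⟨u, _, rfl⟩ <;>
      rcases Finset.mem_union.mp hx with h | h <;>
        obtain ⟨i, _, h⟩ := Finset.mem_image.mp h
    · exact vS_ne_vU h
    · exact vS'_ne_vU h
    · exact vS_ne_vU' h
    · exact vS'_ne_vU' h
  have hdisj : Disjoint (C ∩ scV1 S) (C ∩ scV2 U) :=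
    hdisjV.mono Finset.inter_subset_right Finset.inter_subset_right
  have hsum : (C ∩ scV1 S).card + (C ∩ scV2 U).card ≤ C.card := by
    rw [← Finset.card_union_of_disjoint hdisj]
    exact Finset.card_le_card
      (Finset.union_subset Finset.inter_subset_left Finset.inter_subset_left)
  have hc1 : (D.image vS).card ≤ D.card := Finset.card_image_le
  have hc2 : D.card ≤ T.card + (W.image g).card := Finset.card_union_le _ _
  have hc3 : (W.image g).card ≤ W.card := Finset.card_image_le
  omega

end SetCover
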